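/- Let P be an n-element poset and let k be an integer with 0 ≤ k ≤ n−2. Then P has a k-untangled labeling if and only if P has a lower order ideal of size k+2 that is not an antichain. -/

import Mathlib

/-! After `t` promotions, every element carrying one of the top `t` labels is golden: promotion
lowers all labels by one except along the promotion chain, where each element takes over the label
of its successor, the smallest label above it. Hence a descent `u < w` of `∂^{n-k-2}(L)` lies among
the `k + 2` smallest labels, and these label a lower order ideal that is not an antichain.
Conversely, give a lower order ideal `Q` of size `k + 2` the top `k + 2` labels, with a comparable
pair `x < y` of `Q` labelled in reverse order. Each promotion chain starts outside `Q` and, `Q`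
being a lower set, never enters it, so each of the first `n - k - 2` promotions just lowers the
labels on `Q` by one, and the reversed pair survives. -/

open scoped Classical

noncomputable section

abbrev Labeling (P : Type*) [Fintype P] : Type _ := P ≃ Fin (Fintype.card P)

variable {P : Type*} [Fintype P] [PartialOrder P]

def IsLinearExt (L : Labeling P) : Prop := ∀ x y : P, x ≤ y → L x ≤ L y

def lSucc (L : Labeling P) (v : P)
    (h : (Finset.univ.filter fun y => v < y).Nonempty) : P :=
  L.symm (((Finset.univ.filter fun y => v < y).image L).min' (h.image _))

lemma lt_lSucc (L : Labeling P) (v : P)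
    (h : (Finset.univ.filter fun y => v < y).Nonempty) : v < lSucc L v h := by
  have hmem := Finset.min'_mem ((Finset.univ.filter fun y => v < y).image L) (h.image _)
  obtain ⟨y, hy, hLy⟩ := Finset.mem_image.mp hmem
  have heq : lSucc L v h = y := by
    unfold lSucc
    rw [← hLy, Equiv.symm_apply_apply]
  rw [heq]
  exact (Finset.mem_filter.mp hy).2

def promChainFrom (L : Labeling P) (v : P) : List P :=
  if h : (Finset.univ.filter fun y => v < y).Nonempty then
    v :: promChainFrom L (lSucc L v h)
  else [v]
termination_by (Finset.univ.filter fun y => v < y).card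
decreasing_by
  apply Finset.card_lt_card
  refine (Finset.ssubset_iff_of_subset ?_).mpr ?_
  · intro z hz
    simp only [Finset.mem_filter, Finset.mem_univ, true_and] at *
    exact lt_trans (lt_lSucc L v h) hz
  · exact ⟨lSucc L v h, by simp [lt_lSucc L v h], by simp⟩

def promote (L : Labeling P) : Labeling P :=
  if h : Nonempty P then
    ((List.formPerm (promChainFrom L (L.symm ⟨0, @Fintype.card_pos P _ h⟩))).trans L).trans
      (finRotate (Fintype.card P)).symm
  else L

/-- The label of `x` under `L`, as an integer in `{1, …, n}`. -/
def labelOf (L : Labeling P) (x : P) : ℕ := (L x : ℕ) + 1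

/-- The largest `a ∈ {0, …, n}` such that for all `j ∈ {n−a+1, …, n}`, the set
`{x ∈ P : j ≤ L(x) ≤ n}` is an upper order ideal of `P`. -/
def frozenA (L : Labeling P) : ℕ :=
  sSup {a : ℕ | a ≤ Fintype.card P ∧
    ∀ j, Fintype.card P - a + 1 ≤ j → j ≤ Fintype.card P →
      IsUpperSet {x : P | j ≤ labelOf L x ∧ labelOf L x ≤ Fintype.card P}}

/-- `x` is frozen with respect to `L` if `n − a + 1 ≤ L(x) ≤ n`, where `a` is as in `frozenA`. -/
def IsFrozen (L : Labeling P) (x : P) : Prop :=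
  Fintype.card P - frozenA L + 1 ≤ labelOf L x

/-- A labeling of an `n`-element poset is tangled if `n ≥ 2` and `∂^{n−2}(L)` is
not a linear extension. -/
def IsTangled (L : Labeling P) : Prop :=
  2 ≤ Fintype.card P ∧ ¬ IsLinearExt (promote^[Fintype.card P - 2] L)

/-- A labeling of an `n`-element poset is `k`-untangled if `n ≥ k + 2` and
`∂^{n−k−2}(L)` is not a linear extension. -/
def IsUntangled (k : ℕ) (L : Labeling P) : Prop :=
  k + 2 ≤ Fintype.card P ∧ ¬ IsLinearExt (promote^[Fintype.card P - k - 2] L)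

/-- The comparability graph of a poset. -/
def compGraph (P : Type*) [PartialOrder P] : SimpleGraph P where
  Adj x y := x ≠ y ∧ (x ≤ y ∨ y ≤ x)
  symm := by
    constructor
    intro x y hxy
    exact ⟨hxy.1.symm, hxy.2.symm⟩
  loopless := by
    constructor
    intro x hx
    exact hx.1 rfl

/-- The standardization of an injective map from a finite type into a linear order:
the unique relabeling by `{1, …, n}` with the same relative order of values. -/
def standardize {R β : Type*} [Fintype R] [LinearOrder β]
    (f : R → β) (hf : Function.Injective f) : R ≃ Fin (Fintype.card R) :=
  have hcard : (Finset.univ.image f).card = Fintype.card R := by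
    rw [Finset.card_image_of_injective _ hf, Finset.card_univ]
  (Equiv.ofBijective (fun x => (⟨f x, by simp⟩ : ↥(Finset.univ.image f)))
    (by
      rw [Fintype.bijective_iff_injective_and_card]
      refine ⟨fun a b hab => hf (congrArg Subtype.val hab), ?_⟩
      rw [Fintype.card_coe, hcard])).trans
    ((Finset.univ.image f).orderIsoOfFin hcard).symm.toEquiv

/-- The toggle operator `τ_{k+1}`: it swaps the labels `k+1` and `k+2` (i.e. the
`Fin`-labels `k` and `k+1`) unless `L⁻¹(k+1) <_P L⁻¹(k+2)`. -/
def toggle (L : Labeling P) (k : ℕ) : Labeling P :=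
  if h : k + 1 < Fintype.card P then
    if L.symm ⟨k, Nat.lt_of_succ_lt h⟩ < L.symm ⟨k + 1, h⟩ then L
    else L.trans (Equiv.swap ⟨k, Nat.lt_of_succ_lt h⟩ ⟨k + 1, h⟩)
  else L

/-- An element `x` is `L`-golden if every element strictly above it has a larger label. -/
def IsGolden (L : Labeling P) (x : P) : Prop := ∀ y : P, x < y → L x < L y

/-- The largest label `n` of an `n`-element poset, as an element of `Fin n`. -/
def topFin (P : Type*) [Fintype P] [Nonempty P] : Fin (Fintype.card P) :=
  ⟨Fintype.card P - 1, Nat.sub_lt Fintype.card_pos Nat.one_pos⟩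

open Finset

lemma val_finRotate_symm_zero {n : ℕ} [NeZero n] : ((finRotate n).symm 0 : ℕ) = n - 1 := by
  obtain ⟨m, rfl⟩ := Nat.exists_eq_succ_of_ne_zero (NeZero.ne n)
  simp [Fin.coe_neg_one]

section PromotionChain

variable (L : Labeling P)

lemma label_lSucc_le {v w : P} (h : (univ.filter fun y => v < y).Nonempty) (hvw : v < w) :
    L (lSucc L v h) ≤ L w := by
  rw [lSucc, Equiv.apply_symm_apply]
  exact min'_le _ _ (mem_image_of_mem _ (by simpa using hvw))

lemma promChainFrom_eq_cons_lSucc {v : P} (h : (univ.filter fun y => v < y).Nonempty) :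
    promChainFrom L v = v :: promChainFrom L (lSucc L v h) := by
  rw [promChainFrom, dif_pos h]

lemma promChainFrom_eq_singleton {v : P} (h : ¬ (univ.filter fun y => v < y).Nonempty) :
    promChainFrom L v = [v] := by
  rw [promChainFrom, dif_neg h]

lemma promChainFrom_eq_cons (v : P) : ∃ rest, promChainFrom L v = v :: rest := by
  by_cases h : (univ.filter fun y => v < y).Nonempty
  · exact ⟨_, promChainFrom_eq_cons_lSucc L h⟩
  · exact ⟨[], promChainFrom_eq_singleton L h⟩

lemma promChainFrom_ne_nil (v : P) : promChainFrom L v ≠ [] := by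
  obtain ⟨rest, h⟩ := promChainFrom_eq_cons L v
  simp [h]

lemma le_of_mem_promChainFrom {v w : P} (hw : w ∈ promChainFrom L v) : v ≤ w := by
  induction v using promChainFrom.induct L with
  | case1 v h ih =>
    rw [promChainFrom_eq_cons_lSucc L h, List.mem_cons] at hw
    rcases hw with rfl | hw
    · exact le_rfl
    · exact (lt_lSucc L v h).le.trans (ih hw)
  | case2 v h =>
    rw [promChainFrom_eq_singleton L h, List.mem_singleton] at hw
    exact hw.ge

lemma isChain_promChainFrom (v : P) :
    (promChainFrom L v).IsChain fun a b => ∃ h, b = lSucc L a h := by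
  induction v using promChainFrom.induct L with
  | case1 v h ih =>
    obtain ⟨rest, hrest⟩ := promChainFrom_eq_cons L (lSucc L v h)
    rw [hrest] at ih
    rw [promChainFrom_eq_cons_lSucc L h, hrest]
    exact ih.cons_cons ⟨h, rfl⟩
  | case2 v h =>
    rw [promChainFrom_eq_singleton L h]
    exact List.isChain_singleton v

lemma nodup_promChainFrom (v : P) : (promChainFrom L v).Nodup :=
  (List.isChain_iff_pairwise.mp ((isChain_promChainFrom L v).imp
    fun a _ ⟨h, hb⟩ => hb ▸ lt_lSucc L a h)).imp ne_of_lt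

lemma isMax_getLast_promChainFrom (v : P) :
    IsMax ((promChainFrom L v).getLast (promChainFrom_ne_nil L v)) := by
  induction v using promChainFrom.induct L with
  | case1 v h ih =>
    simpa only [promChainFrom_eq_cons_lSucc L h, List.getLast_cons (promChainFrom_ne_nil L _)]
      using ih
  | case2 v h =>
    simp only [promChainFrom_eq_singleton L h, List.getLast_singleton]
    simpa [isMax_iff_forall_not_lt] using h

lemma formPerm_promChainFrom_getLast (v : P) :
    (promChainFrom L v).formPerm ((promChainFrom L v).getLast (promChainFrom_ne_nil L v)) = v := by
  obtain ⟨rest, hrest⟩ := promChainFrom_eq_cons L v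
  simpa only [hrest] using List.formPerm_apply_getLast v rest

lemma formPerm_promChainFrom_of_ne_getLast {v z : P} (hz : z ∈ promChainFrom L v)
    (hne : z ≠ (promChainFrom L v).getLast (promChainFrom_ne_nil L v)) :
    ∃ h, (promChainFrom L v).formPerm z = lSucc L z h := by
  obtain ⟨i, hi, rfl⟩ := List.getElem_of_mem hz
  have hi' : i + 1 < (promChainFrom L v).length := by
    by_contra! hlen
    exact hne (by rw [List.getLast_eq_getElem]; congr 1; omega)
  rw [List.formPerm_apply_lt_getElem _ (nodup_promChainFrom L v) i hi']
  obtain ⟨h, hsucc⟩ := List.isChain_iff_getElem.mp (isChain_promChainFrom L v) i hi'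
  exact ⟨h, hsucc⟩

end PromotionChain

section Promote

variable [Nonempty P] (L : Labeling P)

def promChain : List P := promChainFrom L (L.symm 0)

def promChainTop : P := (promChain L).getLast (promChainFrom_ne_nil L _)

lemma promote_apply (z : P) :
    promote L z = (finRotate _).symm (L ((promChain L).formPerm z)) := by
  rw [promote, dif_pos ‹_›]
  rfl

lemma isMax_promChainTop : IsMax (promChainTop L) := isMax_getLast_promChainFrom L _

lemma formPerm_promChain_promChainTop : (promChain L).formPerm (promChainTop L) = L.symm 0 :=
  formPerm_promChainFrom_getLast L _

lemma label_formPerm_promChain_ne_zero {z : P} (hz : z ≠ promChainTop L) :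
    L ((promChain L).formPerm z) ≠ 0 := by
  intro h0
  apply hz
  apply (promChain L).formPerm.injective
  rw [formPerm_promChain_promChainTop, ← h0, Equiv.symm_apply_apply]

lemma val_promote_promChainTop : (promote L (promChainTop L) : ℕ) = Fintype.card P - 1 := by
  rw [promote_apply, formPerm_promChain_promChainTop, Equiv.apply_symm_apply,
    val_finRotate_symm_zero]

lemma val_promote_of_ne_promChainTop {z : P} (hz : z ≠ promChainTop L) :
    (promote L z : ℕ) = L ((promChain L).formPerm z) - 1 := by
  rw [promote_apply, coe_finRotate_symm_of_ne_zero (label_formPerm_promChain_ne_zero L hz)]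

lemma val_promote_of_not_mem {z : P} (hz : z ∉ promChain L) : (promote L z : ℕ) = L z - 1 := by
  have hz_top : z ≠ promChainTop L := fun h => hz (h ▸ List.getLast_mem _)
  rw [val_promote_of_ne_promChainTop L hz_top, List.formPerm_apply_of_notMem hz]

end Promote

lemma isGolden_promote [Nonempty P] {L : Labeling P} {a : ℕ}
    (hL : ∀ x, Fintype.card P - a ≤ (L x : ℕ) → IsGolden L x) {x : P}
    (hx : Fintype.card P - (a + 1) ≤ (promote L x : ℕ)) : IsGolden (promote L) x := by
  intro y hxy
  have hx_top : x ≠ promChainTop L := fun h => (isMax_promChainTop L).not_lt (h ▸ hxy)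
  have hx_label : (L ((promChain L).formPerm x) : ℕ) ≠ 0 :=
    Fin.val_ne_zero_iff.mpr (label_formPerm_promChain_ne_zero L hx_top)
  rw [val_promote_of_ne_promChainTop L hx_top] at hx
  rw [Fin.lt_def, val_promote_of_ne_promChainTop L hx_top]
  by_cases hy_top : y = promChainTop L
  · rw [hy_top, val_promote_promChainTop]
    have := (L ((promChain L).formPerm x)).isLt
    omega
  rw [val_promote_of_ne_promChainTop L hy_top]
  have hy_le : y ≤ (promChain L).formPerm y := by
    by_cases hy : y ∈ promChain L
    · obtain ⟨h, he⟩ := formPerm_promChainFrom_of_ne_getLast L hy hy_top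
      exact he ▸ (lt_lSucc L y h).le
    · rw [List.formPerm_apply_of_notMem hy]
  suffices L ((promChain L).formPerm x) < L ((promChain L).formPerm y) by omega
  by_cases hx_mem : x ∈ promChain L
  · obtain ⟨h, he⟩ := formPerm_promChainFrom_of_ne_getLast L hx_mem hx_top
    refine lt_of_le_of_ne (he ▸ label_lSucc_le L h (hxy.trans_le hy_le)) ?_
    exact fun heq => hxy.ne ((promChain L).formPerm.injective (L.injective heq))
  · rw [List.formPerm_apply_of_notMem hx_mem] at hx hx_label ⊢
    exact hL x (by omega) _ (hxy.trans_le hy_le)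

lemma isGolden_promote_iterate [Nonempty P] (t : ℕ) (L : Labeling P) {x : P}
    (hx : Fintype.card P - t ≤ (promote^[t] L x : ℕ)) : IsGolden (promote^[t] L) x := by
  induction t generalizing x with
  | zero =>
    have := (L x).isLt
    simp only [Function.iterate_zero, id_eq, Nat.sub_zero] at hx
    omega
  | succ t ih =>
    rw [Function.iterate_succ_apply'] at hx ⊢
    exact isGolden_promote (fun y hy => ih hy) hx

lemma isLowerSet_setOf_label_lt {L : Labeling P} {m : ℕ}
    (hL : ∀ x, m ≤ (L x : ℕ) → IsGolden L x) : IsLowerSet {z | (L z : ℕ) < m} := by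
  intro b c hcb hb
  by_contra! hc
  simp only [Set.mem_ofPred_eq, not_lt] at hb hc
  exact (hb.trans_le hc).not_ge (hL c hc b (hcb.lt_of_ne (by rintro rfl; omega))).le

lemma Equiv.nat_card_setOf_val_lt {α : Type*} {n m : ℕ} (e : α ≃ Fin n) (hm : m ≤ n) :
    Nat.card {z | (e z : ℕ) < m} = m := by
  change Nat.card {z // (e z : ℕ) < m} = m
  rw [Nat.card_congr (e.subtypeEquiv (q := fun i : Fin _ => (i : ℕ) < m) fun _ => Iff.rfl),
    Nat.card_eq_fintype_card, Fintype.card_subtype, Fin.card_filter_val_lt]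
  omega

lemma val_promote_of_isLowerSet [Nonempty P] {L : Labeling P} {Q : Set P} (hQ : IsLowerSet Q)
    (hL : ∀ z ∈ Q, (L z : ℕ) ≠ 0) {z : P} (hz : z ∈ Q) : (promote L z : ℕ) = L z - 1 :=
  val_promote_of_not_mem L fun hmem =>
    hL _ (hQ (le_of_mem_promChainFrom L hmem) hz) (by simp)

lemma val_promote_iterate_of_isLowerSet {Q : Set P} (hQ : IsLowerSet Q) {s : ℕ} {L : Labeling P}
    (hL : ∀ z ∈ Q, s ≤ (L z : ℕ)) {z : P} (hz : z ∈ Q) :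
    (promote^[s] L z : ℕ) = L z - s := by
  have : Nonempty P := ⟨z⟩
  induction s generalizing z with
  | zero => rfl
  | succ s ih =>
    have ih' : ∀ w ∈ Q, (promote^[s] L w : ℕ) = L w - s :=
      fun w hw => ih (fun v hv => (hL v hv).trans' s.le_succ) hw
    rw [Function.iterate_succ_apply', val_promote_of_isLowerSet hQ _ hz, ih' z hz]
    · omega
    · intro w hw
      have := hL w hw
      rw [ih' w hw]
      omega

lemma exists_labeling_ge_on {α : Type*} [Fintype α] (Q : Set α) :
    ∃ L : Labeling α, ∀ z ∈ Q, Fintype.card α - Nat.card Q ≤ (L z : ℕ) := by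
  have hcard : Fintype.card (Qᶜ : Set α) + Fintype.card Q = Fintype.card α := by
    rw [Fintype.card_compl_set]
    have := set_fintype_card_le_univ Q
    omega
  refine ⟨(Equiv.Set.sumCompl Q).symm.trans ((Equiv.sumComm _ _).trans
    (((Fintype.equivFin _).sumCongr (Fintype.equivFin _)).trans
      (finSumFinEquiv.trans (finCongr hcard)))), fun z hz => ?_⟩
  simp [Equiv.Set.sumCompl_symm_apply_of_mem hz, Nat.card_eq_fintype_card, ← hcard]

lemma exists_labeling_ge_on_of_ne {α : Type*} [Fintype α] (Q : Set α) {x y : α} (hx : x ∈ Q)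
    (hy : y ∈ Q) (hxy : x ≠ y) :
    ∃ L : Labeling α, (∀ z ∈ Q, Fintype.card α - Nat.card Q ≤ (L z : ℕ)) ∧ L y < L x := by
  obtain ⟨L, hL⟩ := exists_labeling_ge_on Q
  rcases lt_or_gt_of_ne (L.injective.ne hxy.symm) with hlt | hlt
  · exact ⟨L, hL, hlt⟩
  refine ⟨L.trans (Equiv.swap (L x) (L y)), fun z hz => ?_, by simpa using hlt⟩
  simp only [Equiv.trans_apply, Equiv.swap_apply_def]
  split_ifs
  exacts [hL y hy, hL x hx, hL z hz]

lemma exists_lowerSet_of_isUntangled {k : ℕ} {L : Labeling P} (hL : IsUntangled k L) :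
    ∃ Q : Set P, IsLowerSet Q ∧ Nat.card Q = k + 2 ∧ ¬ IsAntichain (· ≤ ·) Q := by
  obtain ⟨hk, hnot⟩ := hL
  set M := promote^[Fintype.card P - k - 2] L
  obtain ⟨u, w, huw, hMwu⟩ : ∃ u w, u ≤ w ∧ M w < M u := by
    simpa [IsLinearExt] using hnot
  have : Nonempty P := ⟨u⟩
  have hne : u ≠ w := by rintro rfl; exact hMwu.false
  have hgolden : ∀ x, k + 2 ≤ (M x : ℕ) → IsGolden M x := by
    intro x hx
    apply isGolden_promote_iterate
    change _ ≤ (M x : ℕ)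
    omega
  have hMu : (M u : ℕ) < k + 2 := by
    by_contra! hMu
    exact (hgolden u hMu w (huw.lt_of_ne hne)).asymm hMwu
  refine ⟨{z | (M z : ℕ) < k + 2}, isLowerSet_setOf_label_lt hgolden,
    M.nat_card_setOf_val_lt hk, fun hanti => ?_⟩
  exact hanti hMu (show (M w : ℕ) < k + 2 by rw [Fin.lt_def] at hMwu; omega) hne huw

lemma exists_isUntangled_of_lowerSet {k : ℕ} {Q : Set P} (hQ : IsLowerSet Q)
    (hcard : Nat.card Q = k + 2) (hQ_anti : ¬ IsAntichain (· ≤ ·) Q) :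
    ∃ L : Labeling P, IsUntangled k L := by
  obtain ⟨x, hx, y, hy, hxy_ne, hxy⟩ : ∃ x ∈ Q, ∃ y ∈ Q, x ≠ y ∧ x ≤ y := by
    simpa [IsAntichain, Set.Pairwise] using hQ_anti
  have hk : k + 2 ≤ Fintype.card P := by
    rw [← hcard, Nat.card_eq_fintype_card]
    exact set_fintype_card_le_univ Q
  obtain ⟨L, hL, hLyx⟩ := exists_labeling_ge_on_of_ne Q hx hy hxy_ne
  rw [hcard] at hL
  refine ⟨L, hk, fun hlin => ?_⟩
  have hxy_label := hlin x y hxy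
  rw [Fin.le_def, Nat.sub_sub, val_promote_iterate_of_isLowerSet hQ hL hx,
    val_promote_iterate_of_isLowerSet hQ hL hy] at hxy_label
  have hx_label := hL x hx
  have hy_label := hL y hy
  rw [Fin.lt_def] at hLyx
  omega

theorem untangled_iff_lowerSet_general (k : ℕ) :
    (∃ L : Labeling P, IsUntangled k L) ↔
      ∃ Q : Set P, IsLowerSet Q ∧ Nat.card Q = k + 2 ∧ ¬ IsAntichain (· ≤ ·) Q :=
  ⟨fun ⟨_, hL⟩ => exists_lowerSet_of_isUntangled hL,
    fun ⟨_, hQ, hcard, hQ_anti⟩ => exists_isUntangled_of_lowerSet hQ hcard hQ_anti⟩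

/-- For `0 ≤ k ≤ n − 2`, the poset `P` has a `k`-untangled labeling
if and only if it has a lower order ideal of size `k + 2` that is not an antichain. -/
theorem untangled_iff_lowerSet (k : ℕ) (hk : k + 2 ≤ Fintype.card P) :
    (∃ L : Labeling P, IsUntangled k L) ↔
      ∃ Q : Set P, IsLowerSet Q ∧ Nat.card Q = k + 2 ∧ ¬ IsAntichain (· ≤ ·) Q :=
  untangled_iff_lowerSet_general k

end
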